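/- arXiv:1206.0057 — 3 statements merged into one kernel-verified Lean document; each statement's English description precedes it below -/
import Mathlib

section
/- A skew-symmetric matrix a = (a^{ij}) over ℂ (size 11×11) is of the form a^{ij} = e₁^i e₂^j − e₂^i e₁^j for some vectors e₁, e₂ spanning an isotropic 2-plane if and only if a satisfies: (1) Σ_{i,j} a^{ij}a^{ij} = 0, (2) the Plücker relations a^{[ij}a^{kl]} = 0 (antisymmetrization over all four indices), and (3) Σ_k a^{ki}a^{kj} = 0 for all i,j, together with a ≠ 0. (Formally: a nonzero skew matrix satisfying (1)–(3) has rank 2 and its column space is isotropic.) -/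
/-!
For `a = e₁ ∧ e₂` one has `∑ k, a k i * a k j = e₂ⁱ e₂ʲ B(e₁,e₁) - (e₂ⁱ e₁ʲ + e₁ⁱ e₂ʲ) B(e₁,e₂)
+ e₁ⁱ e₁ʲ B(e₂,e₂)`, so an isotropic plane forces `aᵀ a = 0`, and condition (1) is its trace.
Conversely, if `a p q ≠ 0`, the Plücker relation at `(i, j, p, q)` says that `a` is the wedge of
its columns `p` and `q / a p q`, whose mutual dot products are entries of `aᵀ a = 0`.
In both directions `e₁, e₂` span a plane exactly when some `2 × 2` minor `e₁ⁱ e₂ʲ - e₂ⁱ e₁ʲ`,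
i.e. some entry of `a`, is nonzero.
-/

/-- The standard symmetric bilinear form on `ℂ¹¹`. -/
noncomputable def Bstd (x y : Fin 11 → ℂ) : ℂ := ∑ i, x i * y i

open Module Submodule Matrix

section Field

variable {ι K : Type*} [Field K]

theorem linearIndependent_pair_iff_exists_wedge_ne_zero (u v : ι → K) :
    LinearIndependent K ![u, v] ↔ ∃ i j, u i * v j - v i * u j ≠ 0 := by
  rw [LinearIndependent.pair_iff]
  constructor
  · intro hind
    by_contra! hwedge
    by_cases hv : v = 0
    · simpa using hind 0 1 (by simp [hv])
    obtain ⟨j, hj⟩ := Function.ne_iff.mp hv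
    refine hj (hind (v j) (-u j) (funext fun i => ?_)).1
    simp only [Pi.add_apply, Pi.smul_apply, smul_eq_mul, Pi.zero_apply]
    linear_combination hwedge i j
  · rintro ⟨i, j, hij⟩ s t hst
    have hi := congrFun hst i
    have hj := congrFun hst j
    simp only [Pi.add_apply, Pi.smul_apply, smul_eq_mul, Pi.zero_apply] at hi hj
    constructor
    · refine (mul_eq_zero.mp ?_).resolve_right hij
      linear_combination v j * hi - v i * hj
    · refine (mul_eq_zero.mp ?_).resolve_right hij
      linear_combination u i * hj - u j * hi

theorem finrank_span_pair_eq_two_iff (u v : ι → K) :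
    finrank K (span K {u, v}) = 2 ↔ LinearIndependent K ![u, v] := by
  rw [linearIndependent_iff_card_eq_finrank_span, Set.finrank, Matrix.range_cons_cons_empty,
    Fintype.card_fin, eq_comm]

theorem Matrix.eq_wedge_columns_of_plucker (a : Matrix ι ι K) {p q : ι} (hpq : a p q ≠ 0)
    (hpl : ∀ i j k l, a i j * a k l - a i k * a j l + a i l * a j k = 0) (i j : ι) :
    a i j = aᵀ p i * ((a p q)⁻¹ • aᵀ q) j - ((a p q)⁻¹ • aᵀ q) i * aᵀ p j := by
  simp only [Matrix.transpose_apply, Pi.smul_apply, smul_eq_mul]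
  field_simp
  linear_combination hpl i j p q

end Field

section CommRing

variable {ι R : Type*} [Fintype ι] [CommRing R]

theorem forall_mem_span_pair_dotProduct_eq_zero_iff (u v : ι → R) :
    (∀ w ∈ span R {u, v}, ∀ w' ∈ span R {u, v}, w ⬝ᵥ w' = 0) ↔
      u ⬝ᵥ u = 0 ∧ u ⬝ᵥ v = 0 ∧ v ⬝ᵥ v = 0 := by
  constructor
  · intro h
    have hu : u ∈ span R {u, v} := subset_span (by simp)
    have hv : v ∈ span R {u, v} := subset_span (by simp)
    exact ⟨h u hu u hu, h u hu v hv, h v hv v hv⟩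
  · rintro ⟨huu, huv, hvv⟩ w hw w' hw'
    obtain ⟨s, t, rfl⟩ := mem_span_pair.mp hw
    obtain ⟨s', t', rfl⟩ := mem_span_pair.mp hw'
    simp [dotProduct_comm v u, huu, huv, hvv]

theorem sum_wedge_mul_wedge (u v : ι → R) (i j : ι) :
    ∑ k, (u k * v i - v k * u i) * (u k * v j - v k * u j) =
      v i * v j * (u ⬝ᵥ u) - (v i * u j + u i * v j) * (u ⬝ᵥ v) + u i * u j * (v ⬝ᵥ v) := by
  simp only [dotProduct, Finset.mul_sum, ← Finset.sum_sub_distrib, ← Finset.sum_add_distrib]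
  exact Finset.sum_congr rfl fun k _ => by ring

end CommRing

theorem stmt4_general (a : Matrix (Fin 11) (Fin 11) ℂ) :
    (∃ e₁ e₂ : Fin 11 → ℂ,
        (∀ i j, a i j = e₁ i * e₂ j - e₂ i * e₁ j) ∧
        Module.finrank ℂ (Submodule.span ℂ {e₁, e₂}) = 2 ∧
        (∀ w ∈ Submodule.span ℂ {e₁, e₂}, ∀ w' ∈ Submodule.span ℂ {e₁, e₂},
          Bstd w w' = 0)) ↔
      ((∑ i, ∑ j, a i j * a i j = 0) ∧
        (∀ i j k l, a i j * a k l - a i k * a j l + a i l * a j k = 0) ∧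
        (∀ i j, ∑ k, a k i * a k j = 0) ∧
        a ≠ 0) := by
  constructor
  · rintro ⟨e₁, e₂, ha, hrank, hiso⟩
    obtain ⟨h₁₁, h₁₂, h₂₂⟩ := (forall_mem_span_pair_dotProduct_eq_zero_iff e₁ e₂).mp hiso
    have hcol : ∀ i j, ∑ k, a k i * a k j = 0 := fun i j => by
      simp only [ha, sum_wedge_mul_wedge, h₁₁, h₁₂, h₂₂, mul_zero, sub_zero, add_zero]
    refine ⟨?_, fun i j k l => by simp only [ha]; ring, hcol, fun h0 => ?_⟩
    · rw [Finset.sum_comm]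
      exact Finset.sum_eq_zero fun j _ => hcol j j
    · obtain ⟨i, j, hij⟩ := (linearIndependent_pair_iff_exists_wedge_ne_zero e₁ e₂).mp
        ((finrank_span_pair_eq_two_iff e₁ e₂).mp hrank)
      exact hij (by rw [← ha, h0, Matrix.zero_apply])
  · rintro ⟨-, hpl, hcol, hne⟩
    obtain ⟨p, q, hpq⟩ : ∃ p q, a p q ≠ 0 := by
      by_contra! h
      exact hne (Matrix.ext h)
    have ha := a.eq_wedge_columns_of_plucker hpq hpl
    refine ⟨aᵀ p, (a p q)⁻¹ • aᵀ q, ha, ?_, ?_⟩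
    · rw [finrank_span_pair_eq_two_iff, linearIndependent_pair_iff_exists_wedge_ne_zero]
      exact ⟨p, q, ha p q ▸ hpq⟩
    · have hcol' : ∀ i j, aᵀ i ⬝ᵥ aᵀ j = 0 := hcol
      refine (forall_mem_span_pair_dotProduct_eq_zero_iff _ _).mpr ?_
      simp [dotProduct_smul, smul_dotProduct, hcol']

/-- A nonzero skew-symmetric `11×11` complex matrix is of the form
`a^{ij} = e₁^i e₂^j − e₂^i e₁^j` for `e₁, e₂` spanning an isotropic 2-plane iff it
satisfies `Σ a^{ij}a^{ij} = 0`, the Plücker relations, `Σ_k a^{ki}a^{kj} = 0`, and `a ≠ 0`. -/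
theorem stmt4 (a : Matrix (Fin 11) (Fin 11) ℂ) (hskew : a.transpose = -a) :
    (∃ e₁ e₂ : Fin 11 → ℂ,
        (∀ i j, a i j = e₁ i * e₂ j - e₂ i * e₁ j) ∧
        Module.finrank ℂ (Submodule.span ℂ {e₁, e₂}) = 2 ∧
        (∀ w ∈ Submodule.span ℂ {e₁, e₂}, ∀ w' ∈ Submodule.span ℂ {e₁, e₂},
          Bstd w w' = 0)) ↔
      ((∑ i, ∑ j, a i j * a i j = 0) ∧
        (∀ i j k l, a i j * a k l - a i k * a j l + a i l * a j k = 0) ∧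
        (∀ i j, ∑ k, a k i * a k j = 0) ∧
        a ≠ 0) :=
  stmt4_general a
end

section
/- Let W be a 2-dimensional isotropic subspace of ℂ¹¹ = ℝ^{10,1} ⊗ ℂ and let E(W) = (W + W̄) ∩ ℝ^{10,1}. Then dim_ℝ E(W) ∈ {3, 4}; i.e., dim_ℝ E(W) ≥ 3, and dim_ℝ E(W) = 3 occurs exactly when dim_ℂ(W ∩ W̄) = 1, while dim E(W) = 4 occurs when W ∩ W̄ = 0. -/
/-- The complexified Lorentz form of signature `(10,1)` on `ℂ¹¹`. -/
noncomputable def BLor (x y : Fin 11 → ℂ) : ℂ :=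
  ∑ i : Fin 11, (if (i : ℕ) < 10 then (1 : ℂ) else -1) * x i * y i

/-- The conjugate `W̄` of a complex subspace of `ℂ¹¹` (conjugation fixing `ℝ^{10,1}`). -/
noncomputable def conjSub (W : Submodule ℂ (Fin 11 → ℂ)) : Submodule ℂ (Fin 11 → ℂ) where
  carrier := {x | (fun i => (starRingEnd ℂ) (x i)) ∈ W}
  zero_mem' := by
    show (fun i : Fin 11 => (starRingEnd ℂ) ((0 : Fin 11 → ℂ) i)) ∈ W
    have h : (fun i : Fin 11 => (starRingEnd ℂ) ((0 : Fin 11 → ℂ) i)) = 0 := by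
      funext i; simp
    rw [h]; exact W.zero_mem
  add_mem' := by
    intro a b ha hb
    have := W.add_mem ha hb
    have h : (fun i : Fin 11 => (starRingEnd ℂ) ((a + b) i)) =
        (fun i => (starRingEnd ℂ) (a i)) + fun i => (starRingEnd ℂ) (b i) := by
      funext i; simp
    simpa [Set.mem_setOf_eq, h]
  smul_mem' := by
    intro c x hx
    have := W.smul_mem ((starRingEnd ℂ) c) hx
    have h : (fun i : Fin 11 => (starRingEnd ℂ) ((c • x) i)) =
        (starRingEnd ℂ) c • fun i => (starRingEnd ℂ) (x i) := by
      funext i; simp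
    simpa [Set.mem_setOf_eq, h]

/-- The real vectors in `ℂ¹¹`, i.e. the real form `ℝ^{10,1}`, as an `ℝ`-subspace. -/
noncomputable def realSub : Submodule ℝ (Fin 11 → ℂ) where
  carrier := {x | ∀ i, (x i).im = 0}
  zero_mem' := by intro i; simp
  add_mem' := by intro a b ha hb i; simp [ha i, hb i]
  smul_mem' := by intro r x hx i; simp [Complex.smul_im, hx i]

/-- `E(W) = (W + W̄) ∩ ℝ^{10,1}`. -/
noncomputable def EW (W : Submodule ℂ (Fin 11 → ℂ)) : Submodule ℝ (Fin 11 → ℂ) :=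
  (Submodule.restrictScalars ℝ (W ⊔ conjSub W)) ⊓ realSub



open Module

noncomputable def sigmaC : (Fin 11 → ℂ) ≃ₗ[ℝ] (Fin 11 → ℂ) where
  toFun x := fun i => (starRingEnd ℂ) (x i)
  invFun x := fun i => (starRingEnd ℂ) (x i)
  map_add' a b := by funext i; simp
  map_smul' r x := by funext i; simp
  left_inv x := by funext i; simp
  right_inv x := by funext i; simp

noncomputable def JC : (Fin 11 → ℂ) ≃ₗ[ℝ] (Fin 11 → ℂ) where
  toFun x := Complex.I • x
  invFun x := (-Complex.I) • x
  map_add' a b := by simp [smul_add]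
  map_smul' r x := by funext i; simp; ring
  left_inv x := by funext i; simp [Complex.ext_iff]
  right_inv x := by funext i; simp [Complex.ext_iff]

lemma mem_conjSub {W : Submodule ℂ (Fin 11 → ℂ)} {x : Fin 11 → ℂ} :
    x ∈ conjSub W ↔ sigmaC x ∈ W := Iff.rfl

lemma conjSub_conjSub (W : Submodule ℂ (Fin 11 → ℂ)) : conjSub (conjSub W) = W := by
  ext x
  rw [mem_conjSub, mem_conjSub]
  have : sigmaC (sigmaC x) = x := by funext i; simp [sigmaC]
  rw [this]

lemma conjSub_mono {A B : Submodule ℂ (Fin 11 → ℂ)} (h : A ≤ B) : conjSub A ≤ conjSub B := by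
  intro x hx; exact h hx

lemma conjSub_sup (A B : Submodule ℂ (Fin 11 → ℂ)) :
    conjSub (A ⊔ B) = conjSub A ⊔ conjSub B := by
  apply le_antisymm
  · intro x hx
    rw [mem_conjSub] at hx
    rcases Submodule.mem_sup.1 hx with ⟨a, ha, b, hb, hab⟩
    rw [Submodule.mem_sup]
    refine ⟨sigmaC a, ?_, sigmaC b, ?_, ?_⟩
    · rw [mem_conjSub]; simpa [show sigmaC (sigmaC a) = a from by funext i; simp [sigmaC]] using ha
    · rw [mem_conjSub]; simpa [show sigmaC (sigmaC b) = b from by funext i; simp [sigmaC]] using hb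
    · have := congrArg sigmaC hab
      rw [map_add] at this
      rw [this, show sigmaC (sigmaC x) = x from by funext i; simp [sigmaC]]
  · exact sup_le (conjSub_mono le_sup_left) (conjSub_mono le_sup_right)

lemma key_finrank (V : Submodule ℂ (Fin 11 → ℂ)) (hV : conjSub V = V) :
    finrank ℝ ↥((V.restrictScalars ℝ) ⊓ realSub) = finrank ℂ ↥V := by
  set R : Submodule ℝ (Fin 11 → ℂ) := (V.restrictScalars ℝ) ⊓ realSub with hR
  set S : Submodule ℝ (Fin 11 → ℂ) := R.map (JC : (Fin 11 → ℂ) →ₗ[ℝ] (Fin 11 → ℂ)) with hS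
  have hconjmem : ∀ x ∈ V, sigmaC x ∈ V := by
    intro x hx
    have hx2 : x ∈ conjSub V := by rw [hV]; exact hx
    exact hx2
  have hinf : R ⊓ S = ⊥ := by
    rw [eq_bot_iff]
    rintro x ⟨hxR, hxS⟩
    rcases Submodule.mem_map.1 hxS with ⟨y, hyR, hyx⟩
    have hyim : ∀ i, (y i).im = 0 := hyR.2
    have hxim : ∀ i, (x i).im = 0 := hxR.2
    have hx0 : x = 0 := by
      funext i
      simp only [Pi.zero_apply]
      have : x i = Complex.I * y i := by rw [← hyx]; simp [JC]
      have h1 : (x i).im = (y i).re := by rw [this]; simp [hyim i]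
      have h2 : (y i).re = 0 := by rw [← h1]; exact hxim i
      have : y i = 0 := Complex.ext h2 (hyim i)
      rw [‹x i = Complex.I * y i›, this, mul_zero]
    simp [hx0]
  have hsup : R ⊔ S = V.restrictScalars ℝ := by
    apply le_antisymm
    · apply sup_le
      · exact inf_le_left
      · rintro x hx
        rcases Submodule.mem_map.1 hx with ⟨y, hyR, hyx⟩
        have : x = Complex.I • y := by rw [← hyx]; rfl
        rw [this]
        exact Submodule.smul_mem V Complex.I hyR.1
    · intro x hx
      have hx' : x ∈ V := hx
      set u : Fin 11 → ℂ := (1/2 : ℂ) • (x + sigmaC x) with hu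
      set v : Fin 11 → ℂ := (-(1/2) * Complex.I) • (x - sigmaC x) with hv
      have huV : u ∈ V := V.smul_mem _ (V.add_mem hx' (hconjmem x hx'))
      have hvV : v ∈ V := V.smul_mem _ (V.sub_mem hx' (hconjmem x hx'))
      have huR : u ∈ R := by
        refine ⟨huV, fun i => ?_⟩
        simp [hu, sigmaC, Complex.ext_iff]
      have hvR : v ∈ R := by
        refine ⟨hvV, fun i => ?_⟩
        simp [hv, sigmaC, Complex.ext_iff]
      have hxuv : x = u + JC v := by
        funext i
        simp [hu, hv, JC, sigmaC, Complex.ext_iff]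
        constructor <;> ring
      rw [hxuv]
      exact Submodule.add_mem _ (Submodule.mem_sup_left huR)
        (Submodule.mem_sup_right (Submodule.mem_map_of_mem hvR))
  have hRS : finrank ℝ ↥S = finrank ℝ ↥R := (LinearEquiv.finrank_map_eq JC R).symm ▸ rfl
  have hadd : finrank ℝ ↥(R ⊔ S) + finrank ℝ ↥(R ⊓ S) = finrank ℝ ↥R + finrank ℝ ↥S :=
    Submodule.finrank_sup_add_finrank_inf_eq R S
  rw [hinf, hsup] at hadd
  have h2 : finrank ℝ ↥(V.restrictScalars ℝ) = 2 * finrank ℂ ↥V := by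
    rw [← Complex.finrank_real_complex, Module.finrank_mul_finrank]; rfl
  simp [finrank_bot, hRS, h2] at hadd
  omega

lemma restrict_conjSub (W : Submodule ℂ (Fin 11 → ℂ)) :
    (conjSub W).restrictScalars ℝ =
      Submodule.map (sigmaC : (Fin 11 → ℂ) →ₗ[ℝ] (Fin 11 → ℂ)) (W.restrictScalars ℝ) := by
  ext x
  simp only [Submodule.restrictScalars_mem, Submodule.mem_map]
  constructor
  · intro hx
    exact ⟨sigmaC x, hx, by funext i; simp [sigmaC]⟩
  · rintro ⟨y, hy, rfl⟩
    have : sigmaC ((sigmaC : (Fin 11 → ℂ) →ₗ[ℝ] (Fin 11 → ℂ)) y) = y := by funext i; simp [sigmaC]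
    show sigmaC _ ∈ W
    rw [this]; exact hy

lemma finrank_conjSub (W : Submodule ℂ (Fin 11 → ℂ)) :
    finrank ℂ ↥(conjSub W) = finrank ℂ ↥W := by
  have h1 : finrank ℝ ↥((conjSub W).restrictScalars ℝ) = finrank ℝ ↥(W.restrictScalars ℝ) := by
    rw [restrict_conjSub]
    exact (LinearEquiv.finrank_map_eq sigmaC (W.restrictScalars ℝ))
  have h2 : ∀ U : Submodule ℂ (Fin 11 → ℂ),
      finrank ℝ ↥(U.restrictScalars ℝ) = 2 * finrank ℂ ↥U := by
    intro U
    rw [← Complex.finrank_real_complex, Module.finrank_mul_finrank]; rfl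
  rw [h2, h2] at h1
  omega

lemma split_sum (f : Fin 11 → ℝ) :
    ∑ i : Fin 11, (if (i : ℕ) < 10 then (1 : ℝ) else -1) * f i =
      (∑ i : Fin 10, f i.castSucc) - f (Fin.last 10) := by
  rw [Fin.sum_univ_castSucc]
  simp [Fin.is_lt]
  ring

lemma lorentz_zero (a : Fin 11 → ℝ)
    (ha : ∑ i : Fin 11, (if (i : ℕ) < 10 then (1 : ℝ) else -1) * a i * a i = 0)
    (h10 : a (Fin.last 10) = 0) : a = 0 := by
  have h : ∑ i : Fin 10, a i.castSucc * a i.castSucc = 0 := by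
    have hs := split_sum (fun i => a i * a i)
    simp only [mul_assoc] at ha
    rw [ha, h10] at hs
    linarith [hs]
  have hz : ∀ i : Fin 10, a i.castSucc = 0 := by
    intro i
    have hnn : ∀ j ∈ Finset.univ, 0 ≤ a (Fin.castSucc j) * a (Fin.castSucc j) :=
      fun j _ => mul_self_nonneg _
    have := (Finset.sum_eq_zero_iff_of_nonneg hnn).1 h i (Finset.mem_univ i)
    exact mul_self_eq_zero.1 this
  funext i
  refine Fin.lastCases ?_ ?_ i
  · exact h10
  · exact hz

lemma lorentz_rel (a b : Fin 11 → ℝ)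
    (ha : ∑ i : Fin 11, (if (i : ℕ) < 10 then (1 : ℝ) else -1) * a i * a i = 0)
    (hb : ∑ i : Fin 11, (if (i : ℕ) < 10 then (1 : ℝ) else -1) * b i * b i = 0)
    (hab : ∑ i : Fin 11, (if (i : ℕ) < 10 then (1 : ℝ) else -1) * a i * b i = 0) :
    b (Fin.last 10) • a = a (Fin.last 10) • b := by
  set al := a (Fin.last 10)
  set bl := b (Fin.last 10)
  have hA : ∑ i : Fin 10, a i.castSucc * a i.castSucc = al * al := by
    have := split_sum (fun i => a i * a i)
    simp only [mul_assoc] at ha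
    rw [ha] at this
    linarith [this]
  have hB : ∑ i : Fin 10, b i.castSucc * b i.castSucc = bl * bl := by
    have := split_sum (fun i => b i * b i)
    simp only [mul_assoc] at hb
    rw [hb] at this
    linarith [this]
  have hC : ∑ i : Fin 10, a i.castSucc * b i.castSucc = al * bl := by
    have := split_sum (fun i => a i * b i)
    simp only [mul_assoc] at hab
    rw [hab] at this
    linarith [this]
  have hw : ∑ i : Fin 10, (bl * a i.castSucc - al * b i.castSucc) *
      (bl * a i.castSucc - al * b i.castSucc) = 0 := by
    have expand : ∑ i : Fin 10, (bl * a i.castSucc - al * b i.castSucc) *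
        (bl * a i.castSucc - al * b i.castSucc) =
        bl * bl * (∑ i : Fin 10, a i.castSucc * a i.castSucc)
        - 2 * (al * bl) * (∑ i : Fin 10, a i.castSucc * b i.castSucc)
        + al * al * (∑ i : Fin 10, b i.castSucc * b i.castSucc) := by
      rw [Finset.mul_sum, Finset.mul_sum, Finset.mul_sum, ← Finset.sum_sub_distrib,
        ← Finset.sum_add_distrib]
      apply Finset.sum_congr rfl
      intro i _
      ring
    rw [expand, hA, hB, hC]
    ring
  have hz : ∀ i : Fin 10, bl * a i.castSucc - al * b i.castSucc = 0 := by
    intro i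
    have hnn : ∀ j ∈ Finset.univ, 0 ≤ (bl * a (Fin.castSucc j) - al * b (Fin.castSucc j)) *
        (bl * a (Fin.castSucc j) - al * b (Fin.castSucc j)) := fun j _ => mul_self_nonneg _
    have := (Finset.sum_eq_zero_iff_of_nonneg hnn).1 hw i (Finset.mem_univ i)
    exact mul_self_eq_zero.1 this
  funext i
  refine Fin.lastCases ?_ ?_ i
  · show bl * al = al * bl
    ring
  · intro i
    have := hz i
    show bl * a i.castSucc = al * b i.castSucc
    linarith

lemma toReal (x y : Fin 11 → ℂ) (hx : ∀ i, (x i).im = 0) (hy : ∀ i, (y i).im = 0)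
    (h : ∑ i : Fin 11, (if (i : ℕ) < 10 then (1 : ℂ) else -1) * x i * y i = 0) :
    ∑ i : Fin 11, (if (i : ℕ) < 10 then (1 : ℝ) else -1) * (x i).re * (y i).re = 0 := by
  have key : ((∑ i : Fin 11, (if (i : ℕ) < 10 then (1 : ℝ) else -1) * (x i).re * (y i).re : ℝ) : ℂ)
      = ∑ i : Fin 11, (if (i : ℕ) < 10 then (1 : ℂ) else -1) * x i * y i := by
    push_cast
    apply Finset.sum_congr rfl
    intro i _
    have hxi : x i = ((x i).re : ℂ) := Complex.ext (by simp) (by simp [hx i])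
    have hyi : y i = ((y i).re : ℂ) := Complex.ext (by simp) (by simp [hy i])
    rw [hxi, hyi]
    split_ifs <;> push_cast [Complex.ofReal_re] <;> ring
  rw [h] at key
  exact_mod_cast key

lemma inter_dim_le (W : Submodule ℂ (Fin 11 → ℂ))
    (hdim : finrank ℂ W = 2)
    (hiso : ∀ w ∈ W, ∀ w' ∈ W, BLor w w' = 0) :
    finrank ℂ ↥(W ⊓ conjSub W) ≤ 1 := by
  by_contra hcon
  push_neg at hcon
  have h2 : 2 ≤ finrank ℂ ↥(W ⊓ conjSub W) := hcon
  have heq : W ⊓ conjSub W = W := by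
    apply Submodule.eq_of_le_of_finrank_le inf_le_left
    omega
  have hWle : W ≤ conjSub W := by
    intro w hw
    have hw2 : w ∈ W ⊓ conjSub W := by rw [heq]; exact hw
    exact hw2.2
  have hstable : conjSub W = W := by
    apply le_antisymm
    · have := conjSub_mono hWle
      rwa [conjSub_conjSub] at this
    · exact hWle
  set R : Submodule ℝ (Fin 11 → ℂ) := (W.restrictScalars ℝ) ⊓ realSub with hRdef
  have hRrank : finrank ℝ ↥R = 2 := by
    rw [hRdef, key_finrank W hstable, hdim]
  have hRne : R ≠ ⊥ := by
    intro hbot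
    rw [hbot, finrank_bot] at hRrank
    omega
  obtain ⟨x, hxR, hxne⟩ := Submodule.exists_mem_ne_zero_of_ne_bot hRne
  set a : Fin 11 → ℝ := fun i => (x i).re with hadef
  have hxa : ∀ i, x i = ((a i : ℝ) : ℂ) := fun i =>
    Complex.ext (by simp [hadef]) (by simp [hadef, hxR.2 i])
  have haa : ∑ i : Fin 11, (if (i : ℕ) < 10 then (1 : ℝ) else -1) * a i * a i = 0 :=
    toReal x x hxR.2 hxR.2 (hiso x hxR.1 x hxR.1)
  have hal : a (Fin.last 10) ≠ 0 := by
    intro h0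
    have := lorentz_zero a haa h0
    apply hxne
    funext i
    rw [hxa i, congrFun this i]
    simp
  have hle : R ≤ Submodule.span ℝ {x} := by
    intro y hyR
    set b : Fin 11 → ℝ := fun i => (y i).re with hbdef
    have hyb : ∀ i, y i = ((b i : ℝ) : ℂ) := fun i =>
      Complex.ext (by simp [hbdef]) (by simp [hbdef, hyR.2 i])
    have hbb : ∑ i : Fin 11, (if (i : ℕ) < 10 then (1 : ℝ) else -1) * b i * b i = 0 :=
      toReal y y hyR.2 hyR.2 (hiso y hyR.1 y hyR.1)
    have hab : ∑ i : Fin 11, (if (i : ℕ) < 10 then (1 : ℝ) else -1) * a i * b i = 0 :=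
      toReal x y hxR.2 hyR.2 (hiso x hxR.1 y hyR.1)
    have hrel := lorentz_rel a b haa hbb hab
    have hy : y = ((a (Fin.last 10))⁻¹ * b (Fin.last 10)) • x := by
      funext i
      have hco := congrFun hrel i
      simp only [Pi.smul_apply, smul_eq_mul] at hco
      rw [hyb i]
      show ((b i : ℝ) : ℂ) = ((a (Fin.last 10))⁻¹ * b (Fin.last 10)) • x i
      rw [hxa i]
      rw [show ((a (Fin.last 10))⁻¹ * b (Fin.last 10)) • ((a i : ℝ) : ℂ)
        = (((a (Fin.last 10))⁻¹ * b (Fin.last 10) * a i : ℝ) : ℂ) from by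
          simp [Complex.ofReal_mul, Complex.real_smul]]
      congr 1
      field_simp
      linarith [hco]
    rw [hy]
    exact Submodule.smul_mem _ _ (Submodule.mem_span_singleton_self x)
  have : finrank ℝ ↥R ≤ 1 := by
    calc finrank ℝ ↥R ≤ finrank ℝ ↥(Submodule.span ℝ {x}) := Submodule.finrank_mono hle
    _ = 1 := finrank_span_singleton hxne
  omega

/-- For a 2-dimensional isotropic subspace `W ⊆ ℂ¹¹ = ℝ^{10,1} ⊗ ℂ`, the real space
`E(W) = (W + W̄) ∩ ℝ^{10,1}` has dimension 3 or 4; dimension 3 occurs exactly when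
`dim_ℂ (W ∩ W̄) = 1`, and dimension 4 occurs when `W ∩ W̄ = 0`. -/
theorem stmt9 (W : Submodule ℂ (Fin 11 → ℂ))
    (hdim : Module.finrank ℂ W = 2)
    (hiso : ∀ w ∈ W, ∀ w' ∈ W, BLor w w' = 0) :
    3 ≤ Module.finrank ℝ ↥(EW W) ∧
    (Module.finrank ℝ ↥(EW W) = 3 ∨ Module.finrank ℝ ↥(EW W) = 4) ∧
    (Module.finrank ℝ ↥(EW W) = 3 ↔ Module.finrank ℂ ↥(W ⊓ conjSub W) = 1) ∧
    (W ⊓ conjSub W = ⊥ → Module.finrank ℝ ↥(EW W) = 4) := by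
  have hVstable : conjSub (W ⊔ conjSub W) = W ⊔ conjSub W := by
    rw [conjSub_sup, conjSub_conjSub, sup_comm]
  have hEW : finrank ℝ ↥(EW W) = finrank ℂ ↥(W ⊔ conjSub W) :=
    key_finrank (W ⊔ conjSub W) hVstable
  have hsum : finrank ℂ ↥(W ⊔ conjSub W) + finrank ℂ ↥(W ⊓ conjSub W) = 4 := by
    rw [Submodule.finrank_sup_add_finrank_inf_eq, finrank_conjSub, hdim]
  have hd : finrank ℂ ↥(W ⊓ conjSub W) ≤ 1 := inter_dim_le W hdim hiso
  refine ⟨by omega, by omega, by constructor <;> (intro h; omega), ?_⟩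
  intro hbot
  rw [hbot, finrank_bot] at hsum
  omega
end

section
/- Let W be a 2-dimensional isotropic subspace of complexified Minkowski space ℂ¹¹ with W ∩ W̄ of complex dimension 1, and set E(W) = (W + W̄) ∩ ℝ^{10,1} (a 3-dimensional real space). Then the restriction of the Lorentz form to E(W) is degenerate with radical the real isotropic line underlying W ∩ W̄, and the induced form on E(W)/radical is positive definite; in particular the restricted form on E(W) has signature (2,0) with a 1-dimensional kernel. -/
/-!
`E(W)` is the real form of the conjugation-stable space `W + W̄`, so
`dim_ℝ E(W) = dim_ℂ (W + W̄) = 2 + 2 - 1 = 3`; likewise the real points of `W ∩ W̄` form a line,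
spanned by a real null vector `ℓ`. As `W` and `W̄` are isotropic, `W ∩ W̄` is orthogonal to
`W + W̄`, so `ℓ` lies in the radical. The key Lorentzian fact is that a real vector `x` with
`⟨x, x⟩ ≤ 0` orthogonal to a nonzero real null vector `ℓ` is a multiple of `ℓ`: the vector
`ℓ₀ x - x₀ ℓ` has vanishing time component, hence is spacelike or zero, while its square is
`ℓ₀² ⟨x, x⟩ ≤ 0`. So the form is positive semidefinite on `E(W)` and its null vectors are exactly
the multiples of `ℓ`, i.e. the radical.
-/

section RealForm

open ComplexStarModule

variable {A : Type*} [AddCommGroup A] [Module ℂ A] [StarAddMonoid A] [StarModule ℂ A]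

lemma eq_zero_of_add_I_smul_eq_zero {p q : A} (hp : IsSelfAdjoint p) (hq : IsSelfAdjoint q)
    (h : p + Complex.I • q = 0) : p = 0 ∧ q = 0 := by
  constructor
  · simpa [hp.coe_realPart, hq.imaginaryPart] using congrArg (fun a => (ℜ a : A)) h
  · simpa [hp.imaginaryPart, hq.coe_realPart] using congrArg (fun a => (ℑ a : A)) h

lemma finrank_restrictScalars_inf_selfAdjoint [FiniteDimensional ℂ A] (U : Submodule ℂ A)
    (hU : ∀ x ∈ U, star x ∈ U) :
    Module.finrank ℝ ↥(U.restrictScalars ℝ ⊓ selfAdjoint.submodule ℝ A) = Module.finrank ℂ U := by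
  set P := U.restrictScalars ℝ ⊓ selfAdjoint.submodule ℝ A
  let f : (P × P) →ₗ[ℝ] A := P.subtype.coprod (Complex.I • P.subtype)
  have hf : Function.Injective f := by
    rw [← LinearMap.ker_eq_bot, Submodule.eq_bot_iff]
    rintro ⟨p, q⟩ hpq
    obtain ⟨hp, hq⟩ := eq_zero_of_add_I_smul_eq_zero p.2.2 q.2.2 hpq
    exact Prod.ext (Subtype.ext hp) (Subtype.ext hq)
  have hrange : LinearMap.range f = U.restrictScalars ℝ := by
    apply le_antisymm
    · rintro _ ⟨⟨p, q⟩, rfl⟩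
      exact U.add_mem p.2.1 (U.smul_mem _ q.2.1)
    · intro z hz
      have hre : (ℜ z : A) ∈ P := ⟨by
        rw [realPart_apply_coe]; exact (U.restrictScalars ℝ).smul_mem _ (U.add_mem hz (hU z hz)),
        (ℜ z).2⟩
      have him : (ℑ z : A) ∈ P := ⟨by
        rw [imaginaryPart_apply_coe]
        exact U.smul_mem _ ((U.restrictScalars ℝ).smul_mem _ (U.sub_mem hz (hU z hz))), (ℑ z).2⟩
      exact ⟨(⟨_, hre⟩, ⟨_, him⟩), realPart_add_I_smul_imaginaryPart z⟩
  have := LinearMap.finrank_range_of_inj hf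
  rw [hrange, Module.finrank_prod] at this
  have h2 := finrank_real_of_complex U
  change Module.finrank ℝ (U.restrictScalars ℝ) = _ at h2
  omega

end RealForm

lemma mem_conjSub_iff {W : Submodule ℂ (Fin 11 → ℂ)} {x : Fin 11 → ℂ} :
    x ∈ conjSub W ↔ star x ∈ W := Iff.rfl

lemma mem_realSub_iff {x : Fin 11 → ℂ} : x ∈ realSub ↔ star x = x := by
  simp only [funext_iff, Pi.star_apply, Complex.star_def, Complex.conj_eq_iff_im]; rfl

lemma realSub_eq_selfAdjoint : realSub = selfAdjoint.submodule ℝ (Fin 11 → ℂ) := by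
  ext x; exact mem_realSub_iff

lemma finrank_restrictScalars_inf_realSub (U : Submodule ℂ (Fin 11 → ℂ))
    (hU : ∀ x ∈ U, star x ∈ U) :
    Module.finrank ℝ ↥(U.restrictScalars ℝ ⊓ realSub) = Module.finrank ℂ U := by
  rw [realSub_eq_selfAdjoint]; exact finrank_restrictScalars_inf_selfAdjoint U hU

section ConjSub

variable {W : Submodule ℂ (Fin 11 → ℂ)}

lemma star_mem_sup_conjSub {x : Fin 11 → ℂ} (hx : x ∈ W ⊔ conjSub W) :
    star x ∈ W ⊔ conjSub W := by
  obtain ⟨w, hw, v, hv, rfl⟩ := Submodule.mem_sup.1 hx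
  rw [star_add, sup_comm]
  exact Submodule.add_mem_sup (by rwa [mem_conjSub_iff, star_star]) hv

lemma star_mem_inf_conjSub {x : Fin 11 → ℂ} (hx : x ∈ W ⊓ conjSub W) :
    star x ∈ W ⊓ conjSub W :=
  ⟨hx.2, by rw [SetLike.mem_coe, mem_conjSub_iff, star_star]; exact hx.1⟩

variable (W) in
lemma finrank_conjSub_s10 : Module.finrank ℂ ↥(conjSub W) = Module.finrank ℂ W := by
  let conjPi : (Fin 11 → ℂ) ≃ₗ[ℝ] (Fin 11 → ℂ) :=
    (AlgEquiv.piCongrRight fun _ => Complex.conjAe).toLinearEquiv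
  have hconj : (conjSub W).restrictScalars ℝ = (W.restrictScalars ℝ).comap conjPi.toLinearMap :=
    rfl
  have h := finrank_real_of_complex (conjSub W)
  change Module.finrank ℝ ((conjSub W).restrictScalars ℝ) = _ at h
  rw [hconj, Submodule.comap_equiv_eq_map_symm, LinearEquiv.finrank_map_eq,
    show Module.finrank ℝ (W.restrictScalars ℝ) = _ from finrank_real_of_complex W] at h
  omega

end ConjSub

noncomputable def lorentzForm : LinearMap.BilinForm ℂ (Fin 11 → ℂ) :=
  LinearMap.mk₂ ℂ BLor
    (fun x y z => by
      simp only [BLor, Pi.add_apply, ← Finset.sum_add_distrib]; congr 1; ext; ring)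
    (fun c x y => by
      simp only [BLor, Pi.smul_apply, smul_eq_mul, Finset.mul_sum]; congr 1; ext; ring)
    (fun x y z => by
      simp only [BLor, Pi.add_apply, ← Finset.sum_add_distrib]; congr 1; ext; ring)
    (fun c x y => by
      simp only [BLor, Pi.smul_apply, smul_eq_mul, Finset.mul_sum]; congr 1; ext; ring)

@[simp] lemma lorentzForm_apply (x y : Fin 11 → ℂ) : lorentzForm x y = BLor x y := rfl

lemma BLor_comm (x y : Fin 11 → ℂ) : BLor x y = BLor y x := by
  simp only [BLor]; congr 1; ext; ring

lemma BLor_star (x y : Fin 11 → ℂ) : BLor (star x) (star y) = star (BLor x y) := by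
  simp [BLor, apply_ite]

lemma BLor_im_eq_zero {x y : Fin 11 → ℂ} (hx : x ∈ realSub) (hy : y ∈ realSub) :
    (BLor x y).im = 0 := by
  rw [← Complex.conj_eq_iff_im, ← Complex.star_def, ← BLor_star,
    mem_realSub_iff.1 hx, mem_realSub_iff.1 hy]

lemma BLor_self_re {x : Fin 11 → ℂ} (hx : x ∈ realSub) :
    (BLor x x).re = ∑ j : Fin 10, (x j.castSucc).re ^ 2 - (x (Fin.last 10)).re ^ 2 := by
  have him : ∀ i, (x i).im = 0 := hx
  rw [BLor, Fin.sum_univ_castSucc, Complex.add_re, Complex.re_sum, sub_eq_add_neg]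
  simp only [Fin.val_castSucc, Fin.is_lt, Fin.val_last, lt_irrefl, if_true, if_false, one_mul,
    neg_mul, Complex.neg_re, Complex.mul_re, him, mul_zero, sub_zero, sq]

lemma eq_zero_of_BLor_self_re_nonpos {x : Fin 11 → ℂ} (hx : x ∈ realSub)
    (hlast : x (Fin.last 10) = 0) (hxx : (BLor x x).re ≤ 0) : x = 0 := by
  rw [BLor_self_re hx, hlast, Complex.zero_re, zero_pow two_ne_zero, sub_zero] at hxx
  have hsq := (Finset.sum_eq_zero_iff_of_nonneg fun j _ => sq_nonneg (x (Fin.castSucc j)).re).1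
    (le_antisymm hxx (Finset.sum_nonneg fun j _ => sq_nonneg _))
  funext i
  refine Fin.lastCases hlast (fun j => ?_) i
  exact Complex.ext (pow_eq_zero_iff two_ne_zero |>.1 (hsq j (Finset.mem_univ j))) (hx _)

lemma eq_smul_of_BLor_self_re_nonpos {x ℓ : Fin 11 → ℂ} (hx : x ∈ realSub) (hℓ : ℓ ∈ realSub)
    (hℓ0 : ℓ ≠ 0) (hℓℓ : BLor ℓ ℓ = 0) (hxℓ : BLor x ℓ = 0) (hxx : (BLor x x).re ≤ 0) :
    ∃ c : ℂ, x = c • ℓ := by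
  set t := (ℓ (Fin.last 10)).re
  set a := (x (Fin.last 10)).re
  have hℓt : ℓ (Fin.last 10) = t := Complex.ext rfl (hℓ _)
  have hxt : x (Fin.last 10) = a := Complex.ext rfl (hx _)
  have ht : t ≠ 0 := fun ht => hℓ0 <|
    eq_zero_of_BLor_self_re_nonpos hℓ (by rw [hℓt, ht, Complex.ofReal_zero]) (by simp [hℓℓ])
  have hv : t • x - a • ℓ ∈ realSub :=
    realSub.sub_mem (realSub.smul_mem t hx) (realSub.smul_mem a hℓ)
  have hvv : BLor (t • x - a • ℓ) (t • x - a • ℓ) = (t : ℂ) ^ 2 * BLor x x := by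
    change lorentzForm _ _ = _
    simp only [← Complex.coe_smul, map_sub, map_smul, LinearMap.sub_apply, LinearMap.smul_apply,
      smul_eq_mul, lorentzForm_apply, BLor_comm ℓ x, hxℓ, hℓℓ]
    ring
  have hv0 : t • x - a • ℓ = 0 := by
    refine eq_zero_of_BLor_self_re_nonpos hv ?_ ?_
    · rw [Pi.sub_apply, Pi.smul_apply, Pi.smul_apply, hxt, hℓt, Complex.real_smul,
        Complex.real_smul, mul_comm, sub_self]
    · rw [hvv, ← Complex.ofReal_pow, Complex.re_ofReal_mul]
      exact mul_nonpos_of_nonneg_of_nonpos (sq_nonneg t) hxx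
  refine ⟨(a / t : ℝ), ?_⟩
  rw [sub_eq_zero] at hv0
  rw [Complex.coe_smul, div_eq_inv_mul, mul_smul, ← hv0, smul_smul, inv_mul_cancel₀ ht, one_smul]

lemma BLor_eq_zero_of_mem_inf_conjSub_of_mem_sup_conjSub {W : Submodule ℂ (Fin 11 → ℂ)}
    (hiso : ∀ w ∈ W, ∀ w' ∈ W, BLor w w' = 0) {x z : Fin 11 → ℂ}
    (hx : x ∈ W ⊓ conjSub W) (hz : z ∈ W ⊔ conjSub W) : BLor x z = 0 := by
  obtain ⟨w, hw, v, hv, rfl⟩ := Submodule.mem_sup.1 hz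
  have hxv : BLor x v = 0 := by
    have h : BLor (star x) (star v) = 0 := hiso _ hx.2 _ hv
    rw [← star_star x, ← star_star v, BLor_star, h, star_zero]
  rw [← lorentzForm_apply, map_add, lorentzForm_apply, lorentzForm_apply, hiso x hx.1 w hw, hxv,
    add_zero]

lemma mem_inf_conjSub_of_BLor_self_re_nonpos {W : Submodule ℂ (Fin 11 → ℂ)}
    (hiso : ∀ w ∈ W, ∀ w' ∈ W, BLor w w' = 0) {ℓ : Fin 11 → ℂ}
    (hℓ : ℓ ∈ EW W ⊓ (W ⊓ conjSub W).restrictScalars ℝ) (hℓ0 : ℓ ≠ 0) {x : Fin 11 → ℂ}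
    (hx : x ∈ EW W) (hxx : (BLor x x).re ≤ 0) : x ∈ W ⊓ conjSub W := by
  have hxℓ : BLor x ℓ = 0 := by
    rw [BLor_comm]; exact BLor_eq_zero_of_mem_inf_conjSub_of_mem_sup_conjSub hiso hℓ.2 hx.1
  obtain ⟨c, rfl⟩ :=
    eq_smul_of_BLor_self_re_nonpos hx.2 hℓ.1.2 hℓ0 (hiso ℓ hℓ.2.1 ℓ hℓ.2.1) hxℓ hxx
  exact (W ⊓ conjSub W).smul_mem c hℓ.2

/-- For a 2-dimensional isotropic `W ⊆ ℂ¹¹` with `dim_ℂ (W ∩ W̄) = 1`, the Lorentz form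
restricted to the 3-dimensional real space `E(W) = (W + W̄) ∩ ℝ^{10,1}` is degenerate,
with radical the real isotropic line underlying `W ∩ W̄`, and positive semidefinite with
null vectors exactly the radical; i.e. it has signature `(2,0)` with 1-dimensional kernel. -/
theorem stmt10 (W : Submodule ℂ (Fin 11 → ℂ))
    (hdim : Module.finrank ℂ W = 2)
    (hiso : ∀ w ∈ W, ∀ w' ∈ W, BLor w w' = 0)
    (hint : Module.finrank ℂ ↥(W ⊓ conjSub W) = 1) :
    Module.finrank ℝ ↥(EW W) = 3 ∧
    -- the restricted form is real-valued and positive semidefinite on `E(W)`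
    (∀ x ∈ EW W, (BLor x x).im = 0 ∧ 0 ≤ (BLor x x).re) ∧
    -- the radical of the restricted form is the real line underlying `W ∩ W̄`
    (∀ x ∈ EW W, ((∀ y ∈ EW W, BLor x y = 0) ↔ x ∈ W ⊓ conjSub W)) ∧
    Module.finrank ℝ ↥(EW W ⊓ Submodule.restrictScalars ℝ (W ⊓ conjSub W)) = 1 ∧
    -- the induced form on the quotient by the radical is positive definite
    (∀ x ∈ EW W, BLor x x = 0 → ∀ y ∈ EW W, BLor x y = 0) := by
  have hsup : Module.finrank ℂ ↥(W ⊔ conjSub W) = 3 := by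
    have := Submodule.finrank_sup_add_finrank_inf_eq W (conjSub W)
    rw [finrank_conjSub_s10] at this
    omega
  have hE : Module.finrank ℝ ↥(EW W) = 3 :=
    (finrank_restrictScalars_inf_realSub _ fun _ => star_mem_sup_conjSub).trans hsup
  have hline : EW W ⊓ (W ⊓ conjSub W).restrictScalars ℝ =
      (W ⊓ conjSub W).restrictScalars ℝ ⊓ realSub :=
    le_antisymm (fun _ hx => ⟨hx.2, hx.1.2⟩)
      (fun _ hx => ⟨⟨Submodule.mem_sup_left hx.1.1, hx.2⟩, hx.1⟩)
  have hrad : Module.finrank ℝ ↥(EW W ⊓ (W ⊓ conjSub W).restrictScalars ℝ) = 1 := by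
    rw [hline, finrank_restrictScalars_inf_realSub _ fun _ => star_mem_inf_conjSub, hint]
  obtain ⟨⟨ℓ, hℓ⟩, hℓ0⟩ := Module.finrank_pos_iff_exists_ne_zero.1 (hrad ▸ one_pos)
  have hnull {x} (hx : x ∈ EW W) (hxx : (BLor x x).re ≤ 0) : x ∈ W ⊓ conjSub W :=
    mem_inf_conjSub_of_BLor_self_re_nonpos hiso hℓ (by simpa using hℓ0) hx hxx
  have horth {x y} (hx : x ∈ W ⊓ conjSub W) (hy : y ∈ EW W) : BLor x y = 0 :=
    BLor_eq_zero_of_mem_inf_conjSub_of_mem_sup_conjSub hiso hx hy.1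
  refine ⟨hE, fun x hx => ⟨BLor_im_eq_zero hx.2 hx.2, ?_⟩,
    fun x hx => ⟨fun h => hnull hx (by simp [h x hx]), fun h y hy => horth h hy⟩, hrad,
    fun x hx hxx y hy => horth (hnull hx (by simp [hxx])) hy⟩
  by_contra! hneg
  have hx0 := hiso x (hnull hx hneg.le).1 x (hnull hx hneg.le).1
  simp [hx0] at hneg
end
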